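/- Let e_k ∈ ℝ^n satisfy e_{k+1} = C(e_k) e_k − d_k where ‖d_k‖ ≤ B for all k ≥ N, and C(e) = ((eᵀe)^{1−1/s} − μ)/((eᵀe)^{1−1/s} + μ) with s ∈ (1,2), μ > 0. If for some k ≥ N we have β(e_k)‖e_k‖ > B(1 + √(1 − β(e_k))) where β(e) = 1 − C(e)², then ‖e_{k+1}‖² < ‖e_k‖². -/

import Mathlib

/-!
With `c = C(e_k)` we have `√(1 - β) = |c|` and `β = (1 - |c|)(1 + |c|)`, so the hypothesis
says exactly `B < (1 - |c|)‖e_k‖`. Hence `‖e_{k+1}‖ ≤ |c|‖e_k‖ + ‖d_k‖ ≤ |c|‖e_k‖ + B < ‖e_k‖`.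
-/

lemma norm_smul_sub_lt_norm {E : Type*} [SeminormedAddCommGroup E] [NormedSpace ℝ E]
    {c B : ℝ} {x y : E} (hy : ‖y‖ ≤ B) (h : B < (1 - |c|) * ‖x‖) :
    ‖c • x - y‖ < ‖x‖ :=
  calc ‖c • x - y‖ ≤ ‖c • x‖ + ‖y‖ := norm_sub_le _ _
    _ = |c| * ‖x‖ + ‖y‖ := by rw [norm_smul, Real.norm_eq_abs]
    _ < ‖x‖ := by linarith

lemma lt_one_sub_abs_mul_of_mul_one_add_sqrt_lt {c B a : ℝ}
    (h : B * (1 + √(1 - (1 - c ^ 2))) < (1 - c ^ 2) * a) :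
    B < (1 - |c|) * a := by
  have hsqrt : √(1 - (1 - c ^ 2)) = |c| := by
    rw [sub_sub_cancel, Real.sqrt_sq_eq_abs]
  have hfactor : (1 - c ^ 2) * a = (1 - |c|) * a * (1 + |c|) := by
    rw [← sq_abs c]; ring
  rw [hsqrt, hfactor] at h
  exact lt_of_mul_lt_mul_right h (by positivity)

theorem stmt_16_general (n : ℕ) (B : ℝ) (N : ℕ)
    (C : EuclideanSpace ℝ (Fin n) → ℝ)
    (e d : ℕ → EuclideanSpace ℝ (Fin n))
    (hd : ∀ k ≥ N, ‖d k‖ ≤ B)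
    (hrec : ∀ k, e (k + 1) = C (e k) • e k - d k)
    (k : ℕ) (hk : N ≤ k)
    (hcond : B * (1 + Real.sqrt (1 - (1 - (C (e k)) ^ 2))) <
      (1 - (C (e k)) ^ 2) * ‖e k‖) :
    ‖e (k + 1)‖ ^ 2 < ‖e k‖ ^ 2 := by
  have hnorm : ‖e (k + 1)‖ < ‖e k‖ := by
    rw [hrec k]
    exact norm_smul_sub_lt_norm (hd k hk) (lt_one_sub_abs_mul_of_mul_one_add_sqrt_lt hcond)
  exact pow_lt_pow_left₀ hnorm (norm_nonneg _) two_ne_zero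

theorem stmt_16 (n : ℕ) (s μ B : ℝ) (hs1 : 1 < s) (hs2 : s < 2) (hμ : 0 < μ)
    (hB : 0 ≤ B) (N : ℕ)
    (C : EuclideanSpace ℝ (Fin n) → ℝ)
    (hC : ∀ e, C e = ((‖e‖ ^ 2 : ℝ) ^ (1 - 1 / s) - μ) /
        ((‖e‖ ^ 2 : ℝ) ^ (1 - 1 / s) + μ))
    (e d : ℕ → EuclideanSpace ℝ (Fin n))
    (hd : ∀ k ≥ N, ‖d k‖ ≤ B)
    (hrec : ∀ k, e (k + 1) = C (e k) • e k - d k)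
    (k : ℕ) (hk : N ≤ k)
    (hcond : B * (1 + Real.sqrt (1 - (1 - (C (e k)) ^ 2))) <
      (1 - (C (e k)) ^ 2) * ‖e k‖) :
    ‖e (k + 1)‖ ^ 2 < ‖e k‖ ^ 2 :=
  stmt_16_general n B N C e d hd hrec k hk hcond
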